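/- arXiv:2007.13710 — 6 statements merged into one kernel-verified Lean document; each statement's English description precedes it below -/
import Mathlib

section
/- Let M = (G, F) be a mixed 2-edge-coloured graph on a finite vertex set V with n ≥ 1 vertices. Then there exists a polynomial P with rational coefficients such that P(k) equals the number of k-colourings of M for every natural number k; moreover P has degree n, its leading coefficient is 1, and its constant term is 0. -/
open SimpleGraph Polynomial

/-- A `k`-colouring of a mixed 2-edge-coloured graph with red edge graph `R`,
blue edge graph `B`, and extra uncoloured edge graph `F`. -/
def IsMixedColouring {V : Type*} (R B F : SimpleGraph V) {k : ℕ} (c : V → Fin k) : Prop :=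
  (∀ u v, (R ⊔ B ⊔ F).Adj u v → c u ≠ c v) ∧
  (∀ u x v y, R.Adj u x → B.Adj v y → c u = c v → c x ≠ c y)

/-- The number of `k`-colourings of the mixed 2-edge-coloured graph `(R, B, F)`. -/
noncomputable def numColourings {V : Type*} (R B F : SimpleGraph V) (k : ℕ) : ℕ :=
  Nat.card {c : V → Fin k // IsMixedColouring R B F c}

/-- A bichromatic 2-path `(x, u, y)`: `xu` red, `uy` blue, `xy` not an edge of `S(M)`. -/
def IsBiPath {V : Type*} (R B F : SimpleGraph V) (x u y : V) : Prop :=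
  R.Adj x u ∧ B.Adj u y ∧ ¬(R ⊔ B ⊔ F).Adj x y

/-- The number of bichromatic 2-paths. -/
noncomputable def numBiPaths {V : Type*} (R B F : SimpleGraph V) : ℕ :=
  Nat.card {p : V × V × V // IsBiPath R B F p.1 p.2.1 p.2.2}

/-- The graph `Λ(M)`: all edges of `S(M)` plus edges joining the ends of
bichromatic 2-paths. -/
def LambdaGraph {V : Type*} (R B F : SimpleGraph V) : SimpleGraph V where
  Adj a b := a ≠ b ∧ ((R ⊔ B ⊔ F).Adj a b ∨
    ∃ w, IsBiPath R B F a w b ∨ IsBiPath R B F b w a)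
  symm := ⟨by
    rintro a b ⟨hab, h⟩
    refine ⟨hab.symm, ?_⟩
    rcases h with h | ⟨w, h⟩
    · exact Or.inl h.symm
    · exact Or.inr ⟨w, h.symm⟩⟩
  loopless := ⟨fun a h => h.1 rfl⟩

/-- `(p.1, p.2)` is a pair of obstructing edges: `p.1` a red edge `ux`, `p.2` a blue edge
`vy`, with the subgraph of `Λ` induced on `{u, x, v, y}` of chromatic number 2. -/
def IsObstructingPair {V : Type*} (R B F : SimpleGraph V) (p : Sym2 V × Sym2 V) : Prop :=
  ∃ u x v y : V, p.1 = s(u, x) ∧ p.2 = s(v, y) ∧ R.Adj u x ∧ B.Adj v y ∧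
    (SimpleGraph.induce {u, x, v, y} (LambdaGraph R B F)).chromaticNumber = 2

/-- The number of pairs of obstructing edges. -/
noncomputable def numObstructing {V : Type*} (R B F : SimpleGraph V) : ℕ :=
  Nat.card {p : Sym2 V × Sym2 V // IsObstructingPair R B F p}

/-- The number of 3-element vertex subsets inducing a triangle. -/
noncomputable def numTriangles {V : Type*} (G : SimpleGraph V) : ℕ :=
  Nat.card {s : Finset V // s.card = 3 ∧ ∀ a ∈ s, ∀ b ∈ s, a ≠ b → G.Adj a b}

/-- A 2-edge-coloured graph is chromatically invariant when for each `k` its number of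
`k`-colourings equals the number of proper `k`-colourings of the underlying graph. -/
def ChromaticallyInvariant {V : Type*} (R B : SimpleGraph V) : Prop :=
  ∀ k : ℕ, Nat.card {c : V → Fin k // IsMixedColouring R B ⊥ c} =
    Nat.card {c : V → Fin k // ∀ u v, (R ⊔ B).Adj u v → c u ≠ c v}

/-- A graph is a join when its vertex set has a partition into two non-empty parts with
every vertex of one part adjacent to every vertex of the other. -/
def IsJoin {W : Type*} (G : SimpleGraph W) : Prop :=
  ∃ X Y : Set W, X.Nonempty ∧ Y.Nonempty ∧ Disjoint X Y ∧ X ∪ Y = Set.univ ∧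
    ∀ x ∈ X, ∀ y ∈ Y, G.Adj x y

/-- Disjoint union of two simple graphs. -/
def disjUnion {α β : Type*} (G : SimpleGraph α) (H : SimpleGraph β) :
    SimpleGraph (α ⊕ β) where
  Adj a b := match a, b with
    | Sum.inl a, Sum.inl b => G.Adj a b
    | Sum.inr a, Sum.inr b => H.Adj a b
    | _, _ => False
  symm := ⟨by rintro (a | a) (b | b) h <;> simp_all <;> exact h.symm⟩
  loopless := ⟨by rintro (a | a) h <;> exact (SimpleGraph.irrefl _) h⟩

/-- The complete bipartite "cross" graph between the two sides of a sum type. -/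
def crossGraph (α β : Type*) : SimpleGraph (α ⊕ β) where
  Adj a b := match a, b with
    | Sum.inl _, Sum.inr _ => True
    | Sum.inr _, Sum.inl _ => True
    | _, _ => False
  symm := ⟨by rintro (a | a) (b | b) h <;> trivial⟩
  loopless := ⟨by rintro (a | a) h <;> exact h⟩

/-!
Every mixed colouring `c` is determined by its kernel partition `ker c` together with an
injective colouring of the classes, and whether `c` is a colouring depends only on `ker c`.
Hence the number of `k`-colourings is `∑ k (k - 1) ⋯ (k - |V/s| + 1)` over the admissible
partitions `s`, a sum of falling factorials. Each has positive degree `|V/s|` (so no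
constant term), and since red and blue edges are disjoint the discrete partition is
admissible and is the only one with `|V|` classes: it contributes the leading term `k^|V|`.
-/

theorem Polynomial.degree_sum_lt {ι R : Type*} [Semiring R] {t : Finset ι} {p : ι → R[X]}
    {n : ℕ} (h : ∀ i ∈ t, (p i).degree < n) : (∑ i ∈ t, p i).degree < n :=
  (degree_sum_le t p).trans_lt ((Finset.sup_lt_iff (WithBot.bot_lt_coe n)).2 h)

theorem Polynomial.degree_descPochhammer (R : Type*) [Ring R] [Nontrivial R]
    [NoZeroDivisors R] (n : ℕ) : (descPochhammer R n).degree = n := by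
  rw [degree_eq_natDegree (monic_descPochhammer R n).ne_zero, descPochhammer_natDegree]

namespace Setoid

variable {α : Type*}

noncomputable instance [Finite α] : Fintype (Setoid α) :=
  have : Finite (Setoid α) :=
    Finite.of_injective (fun s : Setoid α => ⇑s) fun _ _ => eq_iff_rel_eq.mpr
  Fintype.ofFinite _

theorem card_quotient_bot : Nat.card (Quotient (⊥ : Setoid α)) = Nat.card α :=
  (Nat.card_eq_of_bijective _
    ⟨ker_eq_bot_iff.mp (ker_mk_eq ⊥), Quotient.mk_surjective⟩).symm

theorem card_quotient_lt_of_ne_bot [Finite α] {s : Setoid α} (hs : s ≠ ⊥) :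
    Nat.card (Quotient s) < Nat.card α := by
  refine (Nat.card_le_card_of_surjective _ Quotient.mk_surjective).lt_of_ne fun h => hs ?_
  rw [← ker_mk_eq s, ker_eq_bot_iff]
  exact (Quotient.mk_surjective.bijective_of_nat_card_le h.ge).1

def kerEqEquivEmbedding (s : Setoid α) (β : Type*) :
    {f : α → β // ker f = s} ≃ (Quotient s ↪ β) where
  toFun f := ⟨Quotient.lift f.1 fun a b h => by rwa [← f.2] at h,
    fun a b => Quotient.inductionOn₂ a b fun a b h => Quotient.sound (f.2 ▸ h)⟩
  invFun g := ⟨g ∘ Quotient.mk s, by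
    ext a b
    exact g.injective.eq_iff.trans Quotient.eq⟩
  left_inv _ := rfl
  right_inv g := by ext q; induction q using Quotient.inductionOn; rfl

theorem card_ker_eq [Finite α] (s : Setoid α) (β : Type*) [Finite β] :
    Nat.card {f : α → β // ker f = s} =
      (Nat.card β).descFactorial (Nat.card (Quotient s)) := by
  have := Fintype.ofFinite (Quotient s)
  have := Fintype.ofFinite β
  rw [Nat.card_congr (kerEqEquivEmbedding s β), Nat.card_eq_fintype_card,
    Fintype.card_embedding_eq, Nat.card_eq_fintype_card, Nat.card_eq_fintype_card]

end Setoid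

section MixedColouring

variable {V : Type*} (R B F : SimpleGraph V)

/-- `IsMixedColouring R B F c` is by definition `IsMixedColouringPartition R B F (Setoid.ker c)`. -/
def IsMixedColouringPartition (s : Setoid V) : Prop :=
  (∀ u v, (R ⊔ B ⊔ F).Adj u v → ¬ s u v) ∧
  (∀ u x v y, R.Adj u x → B.Adj v y → s u v → ¬ s x y)

variable {R B} in
theorem isMixedColouringPartition_bot (hRB : Disjoint R B) :
    IsMixedColouringPartition R B F ⊥ := by
  refine ⟨fun u v huv => huv.ne, ?_⟩
  rintro u x v y hux hvy (rfl : u = v) (rfl : x = y)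
  exact hRB.le_bot ⟨hux, hvy⟩

open scoped Classical in
theorem numColourings_eq_sum_descFactorial [Finite V] (k : ℕ) :
    numColourings R B F k = ∑ s : {s : Setoid V // IsMixedColouringPartition R B F s},
      k.descFactorial (Nat.card (Quotient s.1)) := by
  let toKer (c : {c : V → Fin k // IsMixedColouring R B F c}) :
      {s : Setoid V // IsMixedColouringPartition R B F s} := ⟨Setoid.ker c.1, c.2⟩
  rw [numColourings, ← Nat.card_congr (Equiv.sigmaFiberEquiv toKer), Nat.card_sigma]
  refine Finset.sum_congr rfl fun s _ => ?_
  have fiber : {c // toKer c = s} ≃ {c : V → Fin k // Setoid.ker c = s.1} :=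
    (Equiv.subtypeEquivRight fun _ => Subtype.ext_iff).trans
      (Equiv.subtypeSubtypeEquivSubtype (p := IsMixedColouring R B F)
        fun {c} (h : Setoid.ker c = s.1) =>
          show IsMixedColouringPartition R B F (Setoid.ker c) from h ▸ s.2)
  rw [Nat.card_congr fiber, Setoid.card_ker_eq, Nat.card_fin]

open scoped Classical in
noncomputable def mixedChromaticPolynomial [Finite V] : ℚ[X] :=
  ∑ s : {s : Setoid V // IsMixedColouringPartition R B F s},
    descPochhammer ℚ (Nat.card (Quotient s.1))

theorem eval_mixedChromaticPolynomial [Finite V] (k : ℕ) :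
    (mixedChromaticPolynomial R B F).eval (k : ℚ) = numColourings R B F k := by
  rw [mixedChromaticPolynomial, numColourings_eq_sum_descFactorial, eval_finsetSum,
    Nat.cast_sum]
  exact Finset.sum_congr rfl fun s _ => descPochhammer_eval_eq_descFactorial ℚ k _

theorem coeff_zero_mixedChromaticPolynomial [Finite V] [Nonempty V] :
    (mixedChromaticPolynomial R B F).coeff 0 = 0 := by
  rw [coeff_zero_eq_eval_zero, mixedChromaticPolynomial, eval_finsetSum]
  refine Finset.sum_eq_zero fun s _ => descPochhammer_ne_zero_eval_zero _ ?_
  exact Nat.card_ne_zero.mpr ⟨⟨⟦Classical.arbitrary V⟧⟩, inferInstance⟩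

variable {R B} in
theorem mixedChromaticPolynomial_eq_add_of_degree_lt [Finite V] (hRB : Disjoint R B) :
    ∃ Q : ℚ[X], Q.degree < Nat.card V ∧
      mixedChromaticPolynomial R B F = descPochhammer ℚ (Nat.card V) + Q := by
  classical
  let bot : {s : Setoid V // IsMixedColouringPartition R B F s} :=
    ⟨⊥, isMixedColouringPartition_bot F hRB⟩
  refine ⟨∑ s ∈ Finset.univ.erase bot, descPochhammer ℚ (Nat.card (Quotient s.1)),
    degree_sum_lt fun s hs => ?_, ?_⟩
  · have hs : s.1 ≠ ⊥ := fun h => Finset.ne_of_mem_erase hs (Subtype.ext h)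
    rw [degree_descPochhammer, Nat.cast_lt]
    exact Setoid.card_quotient_lt_of_ne_bot hs
  · rw [mixedChromaticPolynomial, ← Finset.add_sum_erase _ _ (Finset.mem_univ bot),
      Setoid.card_quotient_bot]

end MixedColouring

theorem chromatic_polynomial_exists_monic_degree_general
    {V : Type*} [Fintype V] (R B F : SimpleGraph V)
    (hRB : Disjoint R B)
    (hn : 1 ≤ Fintype.card V) :
    ∃ P : Polynomial ℚ,
      (∀ k : ℕ, P.eval (k : ℚ) = numColourings R B F k) ∧
      P.degree = Fintype.card V ∧ P.leadingCoeff = 1 ∧ P.coeff 0 = 0 := by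
  have : Nonempty V := Fintype.card_pos_iff.mp hn
  obtain ⟨Q, hQ, hP⟩ := mixedChromaticPolynomial_eq_add_of_degree_lt F hRB
  rw [Nat.card_eq_fintype_card, ← degree_descPochhammer ℚ] at hQ
  rw [Nat.card_eq_fintype_card] at hP
  refine ⟨mixedChromaticPolynomial R B F, eval_mixedChromaticPolynomial R B F, ?_, ?_,
    coeff_zero_mixedChromaticPolynomial R B F⟩
  · rw [hP, degree_add_eq_left_of_degree_lt hQ, degree_descPochhammer]
  · rw [hP]
    exact ((monic_descPochhammer ℚ _).add_of_left hQ).leadingCoeff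

/-- The chromatic polynomial of a mixed 2-edge-coloured graph on `n ≥ 1` vertices exists,
is monic of degree `n`, and has zero constant term. -/
theorem chromatic_polynomial_exists_monic_degree
    {V : Type*} [Fintype V] (R B F : SimpleGraph V)
    (hRB : Disjoint R B) (hF : Disjoint (R ⊔ B) F)
    (hn : 1 ≤ Fintype.card V) :
    ∃ P : Polynomial ℚ,
      (∀ k : ℕ, P.eval (k : ℚ) = numColourings R B F k) ∧
      P.degree = Fintype.card V ∧ P.leadingCoeff = 1 ∧ P.coeff 0 = 0 :=
  chromatic_polynomial_exists_monic_degree_general R B F hRB hn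
end

section
/- Let G = (Γ, R, B) be a 2-edge-coloured graph with no bichromatic 2-path and no pair of obstructing edges (that is, 𝒫_G = ∅ and 𝒪_G = ∅). Then G is chromatically invariant. -/
open SimpleGraph Polynomial

/-
Without bichromatic 2-paths, `Λ` is just the underlying graph. A proper colouring `c` that
violated the red–blue condition on a red edge `ux` and a blue edge `vy` would use only the two
colours `c u ≠ c x` on `{u, x, v, y}`, so it would 2-colour the subgraph of `Λ` induced there,
which contains the edge `ux`: the two edges would be obstructing.
-/

theorem SimpleGraph.Coloring.isBipartite_of_forall_eq_or_eq {W α : Type*} {G : SimpleGraph W}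
    (C : G.Coloring α) {p q : α} (hC : ∀ w, C w = p ∨ C w = q) : G.IsBipartite := by
  refine IsBipartiteWith.isBipartite (s := {w | C w = p}) (t := {w | C w ≠ p})
    ⟨Set.disjoint_left.2 fun _ hs ht => ht hs, fun v w hvw => ?_⟩
  have hne := C.valid hvw
  by_cases hv : C v = p
  · exact .inl ⟨hv, fun hw => hne (hv.trans hw.symm)⟩
  · refine .inr ⟨hv, ?_⟩
    rcases hC v with hv' | hv'
    · exact absurd hv' hv
    · exact (hC w).resolve_right fun hw => hne (hv'.trans hw.symm)

theorem lambdaGraph_eq_of_forall_not_isBiPath {V : Type*} {R B F : SimpleGraph V}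
    (hP : ∀ x u y : V, ¬ IsBiPath R B F x u y) : LambdaGraph R B F = R ⊔ B ⊔ F := by
  ext a b
  simp only [LambdaGraph, hP, or_self, exists_false, or_false]
  exact ⟨And.right, fun h => ⟨h.ne, h⟩⟩

theorem isMixedColouring_iff_of_forall_not_isBiPath_of_forall_not_isObstructingPair
    {V : Type*} {R B F : SimpleGraph V} (hP : ∀ x u y : V, ¬ IsBiPath R B F x u y)
    (hO : ∀ p : Sym2 V × Sym2 V, ¬ IsObstructingPair R B F p) {k : ℕ} (c : V → Fin k) :
    IsMixedColouring R B F c ↔ ∀ u v, (R ⊔ B ⊔ F).Adj u v → c u ≠ c v := by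
  refine ⟨And.left, fun hc => ⟨hc, fun u x v y hux hvy huv hxy => ?_⟩⟩
  refine hO (s(u, x), s(v, y)) ⟨u, x, v, y, rfl, rfl, hux, hvy, ?_⟩
  set S : Set V := {u, x, v, y}
  let C : ((R ⊔ B ⊔ F).induce S).Coloring (Fin k) := Coloring.mk (c ∘ Subtype.val) (hc _ _ ·)
  have hC : ∀ w, C w = c u ∨ C w = c x := by
    rintro ⟨w, hw | hw | hw | hw⟩ <;> subst hw
    exacts [.inl rfl, .inr rfl, .inl huv.symm, .inr hxy.symm]
  have hS : ((R ⊔ B ⊔ F).induce S) ≠ ⊥ :=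
    ne_bot_iff_exists_adj.2 ⟨⟨u, by simp [S]⟩, ⟨x, by simp [S]⟩, by simp [hux]⟩
  rw [lambdaGraph_eq_of_forall_not_isBiPath hP, chromaticNumber_eq_two_iff]
  exact ⟨C.isBipartite_of_forall_eq_or_eq hC, hS⟩

theorem chromaticallyInvariant_of_no_biPath_of_no_obstructing_general
    {V : Type*} (R B : SimpleGraph V)
    (hP : ∀ x u y : V, ¬ IsBiPath R B ⊥ x u y)
    (hO : ∀ p : Sym2 V × Sym2 V, ¬ IsObstructingPair R B ⊥ p) :
    ChromaticallyInvariant R B := fun _ =>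
  Nat.card_congr <| Equiv.subtypeEquivRight fun c => by
    rw [isMixedColouring_iff_of_forall_not_isBiPath_of_forall_not_isObstructingPair hP hO,
      sup_bot_eq]

/-- A 2-edge-coloured graph with no bichromatic 2-path and no pair of obstructing edges
is chromatically invariant. -/
theorem chromaticallyInvariant_of_no_biPath_of_no_obstructing
    {V : Type*} [Fintype V] (R B : SimpleGraph V) (hRB : Disjoint R B)
    (hP : ∀ x u y : V, ¬ IsBiPath R B ⊥ x u y)
    (hO : ∀ p : Sym2 V × Sym2 V, ¬ IsObstructingPair R B ⊥ p) :
    ChromaticallyInvariant R B :=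
  chromaticallyInvariant_of_no_biPath_of_no_obstructing_general R B hP hO
end

section
/- A 2-edge-coloured graph G = (Γ, R, B) is chromatically invariant if and only if for every pair of disjoint non-empty independent sets I₁ and I₂ of Γ, the set of edges of Γ with both ends in I₁ ∪ I₂ is entirely contained in R or entirely contained in B. -/
open SimpleGraph Polynomial

/-! A proper colouring `c` of `R ⊔ B` fails to be a colouring of the 2-edge-coloured graph
exactly when a red edge `ux` and a blue edge `vy` have `c u = c v` and `c x = c y`, that is,
when two colour classes carry edges of both colours. Conversely, any two disjoint non-empty
independent sets are colour classes of a proper colouring: contract each of them to a vertex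
and give all other vertices distinct colours. Since every colouring of the 2-edge-coloured
graph is proper, the counts agree for all `k` iff no proper colouring has such a pair of
classes. -/

section

variable {V : Type*}

theorem Nat.card_subtype_lt_of_imp {α : Type*} [Finite α] {p q : α → Prop}
    (hpq : ∀ a, p a → q a) {x : α} (hqx : q x) (hpx : ¬p x) :
    Nat.card {a // p a} < Nat.card {a // q a} :=
  Set.ncard_lt_ncard ⟨hpq, fun hqp => hpx (hqp hqx)⟩ (Set.toFinite _)

namespace SimpleGraph

theorem exists_adj_of_mem_union_of_independent {G H : SimpleGraph V} (hHG : H ≤ G)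
    {I₁ I₂ : Set V} (hind₁ : ∀ a ∈ I₁, ∀ b ∈ I₁, ¬G.Adj a b)
    (hind₂ : ∀ a ∈ I₂, ∀ b ∈ I₂, ¬G.Adj a b) {a b : V} (ha : a ∈ I₁ ∪ I₂)
    (hb : b ∈ I₁ ∪ I₂) (hab : H.Adj a b) : ∃ u ∈ I₁, ∃ x ∈ I₂, H.Adj u x := by
  rcases ha with ha | ha <;> rcases hb with hb | hb
  · exact absurd (hHG hab) (hind₁ a ha b hb)
  · exact ⟨a, ha, b, hb, hab⟩
  · exact ⟨b, hb, a, ha, hab.symm⟩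
  · exact absurd (hHG hab) (hind₂ a ha b hb)

theorem exists_colouring_const_on_of_independent [Fintype V] (G : SimpleGraph V)
    {I₁ I₂ : Set V} (hne₁ : I₁.Nonempty) (hne₂ : I₂.Nonempty) (hdisj : Disjoint I₁ I₂)
    (hind₁ : ∀ a ∈ I₁, ∀ b ∈ I₁, ¬G.Adj a b) (hind₂ : ∀ a ∈ I₂, ∀ b ∈ I₂, ¬G.Adj a b) :
    ∃ c : V → Fin (Fintype.card V), (∀ a b, G.Adj a b → c a ≠ c b) ∧
      (∀ a ∈ I₁, ∀ b ∈ I₁, c a = c b) ∧ (∀ a ∈ I₂, ∀ b ∈ I₂, c a = c b) := by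
  classical
  obtain ⟨u, hu⟩ := hne₁
  obtain ⟨x, hx⟩ := hne₂
  let f : V → V := fun w => if w ∈ I₁ then u else if w ∈ I₂ then x else w
  have hux : u ≠ x := fun h => Set.disjoint_left.mp hdisj hu (h ▸ hx)
  refine ⟨Fintype.equivFin V ∘ f, fun a b hab hc => ?_, fun a ha b hb => ?_,
    fun a ha b hb => ?_⟩
  · have hf : f a = f b := (Fintype.equivFin V).injective hc
    simp only [f] at hf
    split_ifs at hf <;> grind [G.ne_of_adj hab, hind₁ a, hind₂ a]
  · simp [f, ha, hb]
  · simp [f, ha, hb, Set.disjoint_right.mp hdisj ha, Set.disjoint_right.mp hdisj hb]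

end SimpleGraph

theorem isMixedColouring_bot_iff {R B : SimpleGraph V} {k : ℕ} {c : V → Fin k} :
    IsMixedColouring R B ⊥ c ↔ (∀ u v, (R ⊔ B).Adj u v → c u ≠ c v) ∧
      ∀ u x v y, R.Adj u x → B.Adj v y → c u = c v → c x ≠ c y := by
  simp only [IsMixedColouring, sup_bot_eq]

theorem chromaticallyInvariant_iff_forall_proper_isMixedColouring [Finite V]
    {R B : SimpleGraph V} : ChromaticallyInvariant R B ↔
      ∀ k (c : V → Fin k), (∀ u v, (R ⊔ B).Adj u v → c u ≠ c v) → IsMixedColouring R B ⊥ c := by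
  have hproper {k : ℕ} {c : V → Fin k} (h : IsMixedColouring R B ⊥ c) :=
    (isMixedColouring_bot_iff.mp h).1
  refine ⟨fun hCI k c hc => ?_, fun h k =>
    Nat.card_congr (Equiv.subtypeEquivRight fun c => ⟨hproper, h k c⟩)⟩
  by_contra hc'
  exact (hCI k).not_lt (Nat.card_subtype_lt_of_imp (fun _ => hproper) hc hc')

theorem isMixedColouring_bot_of_monochromatic {R B : SimpleGraph V} (hRB : Disjoint R B)
    (hmono : ∀ I₁ I₂ : Set V, I₁.Nonempty → I₂.Nonempty → Disjoint I₁ I₂ →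
        (∀ a ∈ I₁, ∀ b ∈ I₁, ¬(R ⊔ B).Adj a b) →
        (∀ a ∈ I₂, ∀ b ∈ I₂, ¬(R ⊔ B).Adj a b) →
        ((∀ a b : V, a ∈ I₁ ∪ I₂ → b ∈ I₁ ∪ I₂ → (R ⊔ B).Adj a b → R.Adj a b) ∨
         (∀ a b : V, a ∈ I₁ ∪ I₂ → b ∈ I₁ ∪ I₂ → (R ⊔ B).Adj a b → B.Adj a b)))
    {k : ℕ} {c : V → Fin k} (hc : ∀ u v, (R ⊔ B).Adj u v → c u ≠ c v) :
    IsMixedColouring R B ⊥ c := by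
  refine isMixedColouring_bot_iff.mpr ⟨hc, fun u x v y hux hvy hcuv hcxy => ?_⟩
  have hind (i : Fin k) : ∀ a ∈ {w | c w = i}, ∀ b ∈ {w | c w = i}, ¬(R ⊔ B).Adj a b :=
    fun a ha b hb hab => hc a b hab (ha.trans hb.symm)
  have hdisj : Disjoint {w | c w = c u} {w | c w = c x} :=
    Set.disjoint_left.mpr fun w hwu hwx => hc u x (Or.inl hux) (hwu.symm.trans hwx)
  rcases hmono {w | c w = c u} {w | c w = c x} ⟨u, rfl⟩ ⟨x, rfl⟩ hdisj (hind _) (hind _)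
    with hred | hblue
  · exact disjoint_left.mp hRB v y
      (hred v y (Or.inl hcuv.symm) (Or.inr hcxy.symm) (Or.inr hvy)) hvy
  · exact disjoint_left.mp hRB u x hux (hblue u x (Or.inl rfl) (Or.inr rfl) (Or.inl hux))

end

/-- A 2-edge-coloured graph is chromatically invariant iff for every pair of disjoint
non-empty independent sets `I₁`, `I₂` of the underlying graph, the edges with both ends
in `I₁ ∪ I₂` all lie in `R` or all lie in `B`. -/
theorem chromaticallyInvariant_iff_independent_pairs_monochromatic
    {V : Type*} [Fintype V] (R B : SimpleGraph V) (hRB : Disjoint R B) :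
    ChromaticallyInvariant R B ↔
      ∀ I₁ I₂ : Set V, I₁.Nonempty → I₂.Nonempty → Disjoint I₁ I₂ →
        (∀ a ∈ I₁, ∀ b ∈ I₁, ¬(R ⊔ B).Adj a b) →
        (∀ a ∈ I₂, ∀ b ∈ I₂, ¬(R ⊔ B).Adj a b) →
        ((∀ a b : V, a ∈ I₁ ∪ I₂ → b ∈ I₁ ∪ I₂ → (R ⊔ B).Adj a b → R.Adj a b) ∨
         (∀ a b : V, a ∈ I₁ ∪ I₂ → b ∈ I₁ ∪ I₂ → (R ⊔ B).Adj a b → B.Adj a b)) := by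
  rw [chromaticallyInvariant_iff_forall_proper_isMixedColouring]
  refine ⟨fun hmixed I₁ I₂ hne₁ hne₂ hdisj hind₁ hind₂ => ?_,
    fun hmono _ _ => isMixedColouring_bot_of_monochromatic hRB hmono⟩
  by_contra hmono
  obtain ⟨⟨a, b, ha, hb, hab, hnR⟩, ⟨a', b', ha', hb', hab', hnB⟩⟩ := by
    simpa only [not_or, not_forall, exists_prop] using hmono
  obtain ⟨v, hv, y, hy, hvy⟩ := exists_adj_of_mem_union_of_independent le_sup_right
    hind₁ hind₂ ha hb (hab.resolve_left hnR)
  obtain ⟨u, hu, x, hx, hux⟩ := exists_adj_of_mem_union_of_independent le_sup_left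
    hind₁ hind₂ ha' hb' (hab'.resolve_right hnB)
  obtain ⟨c, hc, hc₁, hc₂⟩ :=
    (R ⊔ B).exists_colouring_const_on_of_independent hne₁ hne₂ hdisj hind₁ hind₂
  exact (isMixedColouring_bot_iff.mp (hmixed _ c hc)).2 u x v y hux hvy
    (hc₁ u hu v hv) (hc₂ x hx y hy)
end

section
/- If G = (Γ, R, B) is a chromatically invariant 2-edge-coloured graph, then for every subset W of the vertex set V, the induced 2-edge-coloured subgraph G[W] (whose underlying graph is the subgraph of Γ induced on W, with each edge keeping its colour from R or B) is chromatically invariant. -/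
open SimpleGraph Polynomial

/-! A proper colouring of `Γ[W]` extends to a proper colouring of `Γ` by giving every vertex
outside `W` a fresh colour of its own. Chromatic invariance of `G` means that every proper
colouring of `Γ` is a colouring of `G`, and the red–blue condition for the extension restricts
to the one for the colouring of `G[W]` we started from. -/

section ChromaticInvariance

variable {V : Type*} {R B : SimpleGraph V}

theorem IsMixedColouring.adj_ne {k : ℕ} {c : V → Fin k} (hc : IsMixedColouring R B ⊥ c)
    {u v : V} (huv : (R ⊔ B).Adj u v) : c u ≠ c v :=
  hc.1 u v (by rwa [sup_bot_eq])

/-- Mixed colourings form a subset of the proper colourings of `R ⊔ B`, so equal finite counts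
force the two sets to coincide. -/
theorem chromaticallyInvariant_iff [Finite V] :
    ChromaticallyInvariant R B ↔ ∀ (k : ℕ) (c : V → Fin k),
      (∀ u v, (R ⊔ B).Adj u v → c u ≠ c v) → IsMixedColouring R B ⊥ c := by
  refine ⟨fun h k c hc => ?_, fun h k => Nat.card_congr <| Equiv.subtypeEquivRight
    fun c => ⟨fun hc _ _ huv => hc.adj_ne huv, h k c⟩⟩
  set M := {c : V → Fin k | IsMixedColouring R B ⊥ c}
  set P := {c : V → Fin k | ∀ u v, (R ⊔ B).Adj u v → c u ≠ c v}
  have hsub : M ⊆ P := fun c hc _ _ huv => hc.adj_ne huv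
  have hcard : P.ncard ≤ M.ncard := by
    rw [← Nat.card_coe_set_eq, ← Nat.card_coe_set_eq]
    exact (h k).ge
  have hcP : c ∈ P := hc
  rwa [← Set.eq_of_subset_of_ncard_le hsub hcard (Set.toFinite P)] at hcP

theorem ChromaticallyInvariant.ne_of_adj_of_eq [Finite V] (h : ChromaticallyInvariant R B)
    {α : Type*} [Finite α] {c : V → α} (hc : ∀ u v, (R ⊔ B).Adj u v → c u ≠ c v)
    {u x v y : V} (hux : R.Adj u x) (hvy : B.Adj v y) (huv : c u = c v) : c x ≠ c y := by
  set e := Finite.equivFin α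
  have hec : IsMixedColouring R B ⊥ (e ∘ c) :=
    chromaticallyInvariant_iff.mp h _ _ fun u v hadj => e.injective.ne (hc u v hadj)
  exact e.injective.ne_iff.mp (hec.2 u x v y hux hvy (congrArg e huv))

end ChromaticInvariance

section ExtendColouring

variable {V α : Type*} (W : Set V)

open Classical in
noncomputable def extendColouring (c : W → α) : V → α ⊕ V :=
  fun v => if hv : v ∈ W then Sum.inl (c ⟨v, hv⟩) else Sum.inr v

@[simp]
theorem extendColouring_coe (c : W → α) (w : W) : extendColouring W c w = Sum.inl (c w) := by
  simp [extendColouring]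

theorem extendColouring_ne_of_adj {G : SimpleGraph V} {c : W → α}
    (hc : ∀ u v, (G.induce W).Adj u v → c u ≠ c v) {u v : V} (huv : G.Adj u v) :
    extendColouring W c u ≠ extendColouring W c v := by
  unfold extendColouring
  split_ifs with hu hv hv
  · exact Sum.inl_injective.ne (hc ⟨u, hu⟩ ⟨v, hv⟩ huv)
  · exact Sum.inl_ne_inr
  · exact Sum.inr_ne_inl
  · exact Sum.inr_injective.ne huv.ne

end ExtendColouring

theorem chromaticallyInvariant_induce_general
    {V : Type*} [Fintype V] (R B : SimpleGraph V)
    (h : ChromaticallyInvariant R B) (W : Set V) :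
    ChromaticallyInvariant (SimpleGraph.induce W R) (SimpleGraph.induce W B) := by
  rw [chromaticallyInvariant_iff]
  intro k c hc
  have hcW : ∀ u v, ((R ⊔ B).induce W).Adj u v → c u ≠ c v := hc
  refine ⟨fun u v huv => hc u v (by rwa [sup_bot_eq] at huv), ?_⟩
  intro u x v y hux hvy huv hxy
  have hext : ∀ u v, (R ⊔ B).Adj u v → extendColouring W c u ≠ extendColouring W c v :=
    fun _ _ => extendColouring_ne_of_adj W hcW
  exact h.ne_of_adj_of_eq hext hux hvy (by simp [huv]) (by simp [hxy])

/-- Every induced subgraph of a chromatically invariant 2-edge-coloured graph is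
chromatically invariant. -/
theorem chromaticallyInvariant_induce
    {V : Type*} [Fintype V] (R B : SimpleGraph V) (hRB : Disjoint R B)
    (h : ChromaticallyInvariant R B) (W : Set V) :
    ChromaticallyInvariant (SimpleGraph.induce W R) (SimpleGraph.induce W B) :=
  chromaticallyInvariant_induce_general R B h W
end

section
/- Let Γ be a simple graph on a finite vertex set V, and suppose V admits a partition into two non-empty sets X and Y such that every vertex of X is adjacent in Γ to every vertex of Y, every vertex of X has a neighbour in X, and every vertex of Y has a neighbour in Y. Then Γ admits a 2-edge-colouring (R, B) with R ≠ ∅ and B ≠ ∅ such that the resulting 2-edge-coloured graph G = (Γ, R, B) is chromatically invariant and every vertex of V is incident with at least one red edge and at least one blue edge. -/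
open SimpleGraph Polynomial

/-!
Colour the edges inside `X` and inside `Y` red (`Γ \ cutGraph X`) and the edges between them
blue (`cutGraph X`, since `Y = Xᶜ`). Let `ux` be red and `vy` blue with `c u = c v` for a proper
colouring `c`. Then `u` and `v` lie on the same side, since otherwise `uv` is an edge; so `x` and
`y` lie on opposite sides and are adjacent, whence `c x ≠ c y`. Thus every proper colouring is
already a colouring of the 2-edge-coloured graph.
-/

section

variable {V : Type*} {Γ : SimpleGraph V} {X : Set V}

theorem chromaticallyInvariant_of_forall_isMixedColouring {R B : SimpleGraph V}
    (h : ∀ (k : ℕ) (c : V → Fin k), (∀ u v, (R ⊔ B).Adj u v → c u ≠ c v) →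
      IsMixedColouring R B ⊥ c) :
    ChromaticallyInvariant R B := fun k =>
  Nat.card_congr <| Equiv.subtypeEquivRight fun c =>
    ⟨fun hc u v huv => hc.1 u v (by simpa using huv), h k c⟩

def cutGraph (X : Set V) : SimpleGraph V where
  Adj a b := ¬(a ∈ X ↔ b ∈ X)
  symm := ⟨fun _ _ h hba => h hba.symm⟩
  loopless := ⟨fun _ h => h Iff.rfl⟩

@[simp]
theorem cutGraph_adj {a b : V} : (cutGraph X).Adj a b ↔ ¬(a ∈ X ↔ b ∈ X) :=
  Iff.rfl

theorem exists_cutGraph_adj (hX : X.Nonempty) (hXc : Xᶜ.Nonempty) (v : V) :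
    ∃ w, (cutGraph X).Adj v w := by
  obtain ⟨x, hx⟩ := hX
  obtain ⟨y, hy⟩ := hXc
  by_cases hv : v ∈ X
  · exact ⟨y, cutGraph_adj.mpr fun h => hy (h.mp hv)⟩
  · exact ⟨x, cutGraph_adj.mpr fun h => hv (h.mpr hx)⟩

theorem cutGraph_le_of_forall_adj (h : ∀ x ∈ X, ∀ y ∈ Xᶜ, Γ.Adj x y) : cutGraph X ≤ Γ := by
  intro a b hab
  by_cases ha : a ∈ X
  · exact h a ha b fun hb => hab (iff_of_true ha hb)
  · exact (h b (not_not.mp fun hb => hab (iff_of_false ha hb)) a ha).symm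

theorem isMixedColouring_sdiff_cutGraph (hcut : cutGraph X ≤ Γ) {k : ℕ} {c : V → Fin k}
    (hc : ∀ u v, Γ.Adj u v → c u ≠ c v) :
    IsMixedColouring (Γ \ cutGraph X) (cutGraph X) ⊥ c := by
  refine ⟨fun u v huv => hc u v ?_, ?_⟩
  · rwa [sup_bot_eq, sdiff_sup_cancel hcut] at huv
  rintro u x v y ⟨-, hux⟩ hvy huv
  have hsame : u ∈ X ↔ v ∈ X := by
    by_contra h
    exact hc u v (hcut h) huv
  exact hc x y (hcut (by simp only [cutGraph_adj] at hux hvy ⊢; tauto))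

theorem chromaticallyInvariant_sdiff_cutGraph (hcut : cutGraph X ≤ Γ) :
    ChromaticallyInvariant (Γ \ cutGraph X) (cutGraph X) :=
  chromaticallyInvariant_of_forall_isMixedColouring fun _ _ hc =>
    isMixedColouring_sdiff_cutGraph hcut fun u v huv =>
      hc u v (by rwa [sdiff_sup_cancel hcut])

theorem exists_sdiff_cutGraph_adj (hX : ∀ x ∈ X, ∃ x' ∈ X, Γ.Adj x x')
    (hXc : ∀ y ∈ Xᶜ, ∃ y' ∈ Xᶜ, Γ.Adj y y') (v : V) :
    ∃ w, (Γ \ cutGraph X).Adj v w := by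
  by_cases hv : v ∈ X
  · obtain ⟨w, hw, hvw⟩ := hX v hv
    exact ⟨w, hvw, fun h => h (iff_of_true hv hw)⟩
  · obtain ⟨w, hw, hvw⟩ := hXc v hv
    exact ⟨w, hvw, fun h => h (iff_of_false hv hw)⟩

end

theorem join_admits_nontrivial_chromaticallyInvariant_colouring_general
    {V : Type*} (Γ : SimpleGraph V) (X Y : Set V)
    (hX : X.Nonempty) (hY : Y.Nonempty) (hdisj : Disjoint X Y) (hcover : X ∪ Y = Set.univ)
    (hjoin : ∀ x ∈ X, ∀ y ∈ Y, Γ.Adj x y)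
    (hXn : ∀ x ∈ X, ∃ x' ∈ X, Γ.Adj x x')
    (hYn : ∀ y ∈ Y, ∃ y' ∈ Y, Γ.Adj y y') :
    ∃ R B : SimpleGraph V, Disjoint R B ∧ R ⊔ B = Γ ∧ R ≠ ⊥ ∧ B ≠ ⊥ ∧
      ChromaticallyInvariant R B ∧
      (∀ v : V, ∃ w, R.Adj v w) ∧ (∀ v : V, ∃ w, B.Adj v w) := by
  obtain rfl : Xᶜ = Y := IsCompl.compl_eq ⟨hdisj, codisjoint_iff.mpr hcover⟩
  have hcut := cutGraph_le_of_forall_adj hjoin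
  have hred := exists_sdiff_cutGraph_adj hXn hYn
  have hblue := exists_cutGraph_adj hX hY
  obtain ⟨x, -⟩ := hX
  exact ⟨Γ \ cutGraph X, cutGraph X, disjoint_sdiff_self_left, sdiff_sup_cancel hcut,
    ne_bot_iff_exists_adj.mpr ⟨x, hred x⟩, ne_bot_iff_exists_adj.mpr ⟨x, hblue x⟩,
    chromaticallyInvariant_sdiff_cutGraph hcut, hred, hblue⟩

/-- A join of two graphs with no isolated vertices admits a non-trivial chromatically
invariant 2-edge-colouring in which every vertex is incident with a red and a blue edge. -/
theorem join_admits_nontrivial_chromaticallyInvariant_colouring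
    {V : Type*} [Fintype V] (Γ : SimpleGraph V) (X Y : Set V)
    (hX : X.Nonempty) (hY : Y.Nonempty) (hdisj : Disjoint X Y) (hcover : X ∪ Y = Set.univ)
    (hjoin : ∀ x ∈ X, ∀ y ∈ Y, Γ.Adj x y)
    (hXn : ∀ x ∈ X, ∃ x' ∈ X, Γ.Adj x x')
    (hYn : ∀ y ∈ Y, ∃ y' ∈ Y, Γ.Adj y y') :
    ∃ R B : SimpleGraph V, Disjoint R B ∧ R ⊔ B = Γ ∧ R ≠ ⊥ ∧ B ≠ ⊥ ∧
      ChromaticallyInvariant R B ∧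
      (∀ v : V, ∃ w, R.Adj v w) ∧ (∀ v : V, ∃ w, B.Adj v w) :=
  join_admits_nontrivial_chromaticallyInvariant_colouring_general Γ X Y hX hY hdisj hcover hjoin hXn
    hYn
end

section
/- Let G = (Γ, R, B) be a 2-edge-coloured graph on n ≥ 1 vertices such that χ(G) = n (equivalently, G admits no (n−1)-colouring). Let H be the 2-edge-coloured graph obtained as the disjoint union of G with a single red edge on two new vertices (no other edges are added). Then for every natural number k, the number of k-colourings of H equals k(k−1)(k−2)⋯(k−n+1) · (k² − k − 2|B|), as an equation in the integers. -/
open SimpleGraph Polynomial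

/-!
A colouring of `G` that repeated a colour would factor through its range, a set of at most
`n - 1` colours; so when `χ(G) = n` the colourings of `G` are exactly the injective maps (an
injective map is a colouring because no edge is both red and blue), of which there are
`k(k-1)⋯(k-n+1)`. Given one of them, `c₀`, the new red edge `ab` may take any pair of distinct
colours `(c a, c b)` except the pairs `(c₀ v, c₀ y)` with `vy` a blue edge in either orientation;
injectivity of `c₀` makes these `2|B|` pairs distinct, leaving `k² - k - 2|B|` choices.
-/

open Function

section DisjUnion

variable {α β : Type*} (G : SimpleGraph α) (H : SimpleGraph β)

@[simp] lemma disjUnion_adj_inl_inl (a b : α) :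
    (disjUnion G H).Adj (.inl a) (.inl b) ↔ G.Adj a b := Iff.rfl

@[simp] lemma disjUnion_adj_inr_inr (a b : β) :
    (disjUnion G H).Adj (.inr a) (.inr b) ↔ H.Adj a b := Iff.rfl

@[simp] lemma not_disjUnion_adj_inl_inr (a : α) (b : β) :
    ¬(disjUnion G H).Adj (.inl a) (.inr b) := id

@[simp] lemma not_disjUnion_adj_inr_inl (a : β) (b : α) :
    ¬(disjUnion G H).Adj (.inr a) (.inl b) := id

end DisjUnion

namespace IsMixedColouring

variable {V : Type*} {R B F : SimpleGraph V}

lemma of_eq_iff {k m : ℕ} {c : V → Fin k} {c' : V → Fin m} (hc : IsMixedColouring R B F c)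
    (h : ∀ a b, c' a = c' b ↔ c a = c b) : IsMixedColouring R B F c' :=
  ⟨fun u v huv he => hc.1 u v huv ((h u v).1 he),
   fun u x v y hr hb hu hx => hc.2 u x v y hr hb ((h u v).1 hu) ((h x y).1 hx)⟩

lemma of_injective (hRB : Disjoint R B) {k : ℕ} {c : V → Fin k} (hc : Injective c) :
    IsMixedColouring R B F c := by
  refine ⟨fun u v huv => hc.ne huv.ne, fun u x v y hr hb hu hx => ?_⟩
  obtain rfl := hc hu
  obtain rfl := hc hx
  exact hRB.le_bot ⟨hr, hb⟩

lemma injective [Fintype V]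
    (hchi : ¬ ∃ c : V → Fin (Fintype.card V - 1), IsMixedColouring R B F c)
    {k : ℕ} {c : V → Fin k} (hc : IsMixedColouring R B F c) : Injective c := by
  by_contra hinj
  have hlt := Fintype.card_lt_of_surjective_not_injective (Set.rangeFactorization c)
    Set.rangeFactorization_surjective (mt Set.rangeFactorization_injective.1 hinj)
  obtain ⟨f⟩ : Nonempty (Set.range c ↪ Fin (Fintype.card V - 1)) :=
    Function.Embedding.nonempty_of_card_le (by rw [Fintype.card_fin]; omega)
  exact hchi ⟨f ∘ Set.rangeFactorization c,
    hc.of_eq_iff fun a b => f.injective.eq_iff.trans Subtype.ext_iff⟩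

end IsMixedColouring

lemma isMixedColouring_iff_injective {V : Type*} [Fintype V] {R B F : SimpleGraph V}
    (hRB : Disjoint R B) (hchi : ¬ ∃ c : V → Fin (Fintype.card V - 1), IsMixedColouring R B F c)
    {k : ℕ} {c : V → Fin k} : IsMixedColouring R B F c ↔ Injective c :=
  ⟨fun hc => hc.injective hchi, IsMixedColouring.of_injective hRB⟩

lemma numColourings_eq_descFactorial {V : Type*} [Fintype V] {R B F : SimpleGraph V}
    (hRB : Disjoint R B) (hchi : ¬ ∃ c : V → Fin (Fintype.card V - 1), IsMixedColouring R B F c)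
    (k : ℕ) : numColourings R B F k = k.descFactorial (Fintype.card V) := by
  rw [numColourings, Nat.card_congr ((Equiv.subtypeEquivRight fun c =>
      isMixedColouring_iff_injective hRB hchi).trans (Equiv.subtypeInjectiveEquivEmbedding _ _)),
    Nat.card_eq_fintype_card, Fintype.card_embedding_eq, Fintype.card_fin]

/-- The colour pairs `p` the ends of the new red edge may take next to a colouring `c₀` of `G`. -/
def IsAdmissibleRedPair {V α : Type*} (B : SimpleGraph V) (c₀ : V → α) (p : α × α) : Prop :=
  p.1 ≠ p.2 ∧ ∀ v y, B.Adj v y → p ≠ (c₀ v, c₀ y)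

section RedEdge

variable {V : Type*} {R B : SimpleGraph V}

lemma isMixedColouring_disjUnion_redEdge_iff {k : ℕ} {c : V ⊕ Fin 2 → Fin k} :
    IsMixedColouring (disjUnion R (⊤ : SimpleGraph (Fin 2))) (disjUnion B ⊥) ⊥ c ↔
      IsMixedColouring R B ⊥ (c ∘ Sum.inl) ∧
        IsAdmissibleRedPair B (c ∘ Sum.inl) (c (.inr 0), c (.inr 1)) := by
  constructor
  · intro hc
    refine ⟨⟨fun u v huv => hc.1 (.inl u) (.inl v) (by simpa using huv),
      fun u x v y hr hb => hc.2 _ _ _ _ hr hb⟩, hc.1 (.inr 0) (.inr 1) (by simp),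
      fun v y hb hp => ?_⟩
    obtain ⟨h0, h1⟩ := Prod.mk.inj hp
    exact hc.2 (.inr 0) (.inr 1) (.inl v) (.inl y) (by simp) hb h0 h1
  · rintro ⟨hc, hne, hblue⟩
    constructor
    · rintro (u | i) (v | j) huv <;> simp at huv
      · exact hc.1 u v (by simpa using huv)
      · fin_cases i <;> fin_cases j <;> simp_all [eq_comm]
    · rintro (u | i) (x | j) (v | i') (y | j') hr hb <;> simp at hr hb
      · exact hc.2 u x v y hr hb
      · fin_cases i <;> fin_cases j <;> simp at hr
        · exact fun h0 h1 => hblue v y hb (Prod.ext h0 h1)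
        · exact fun h1 h0 => hblue y v hb.symm (Prod.ext h0 h1)

def disjUnionRedEdgeColouringEquiv (k : ℕ) :
    {c : V ⊕ Fin 2 → Fin k //
      IsMixedColouring (disjUnion R (⊤ : SimpleGraph (Fin 2))) (disjUnion B ⊥) ⊥ c} ≃
    Σ c₀ : {c₀ : V → Fin k // IsMixedColouring R B ⊥ c₀},
      {p : Fin k × Fin k // IsAdmissibleRedPair B c₀.1 p} where
  toFun c := ⟨⟨c.1 ∘ Sum.inl, (isMixedColouring_disjUnion_redEdge_iff.1 c.2).1⟩,
    ⟨_, (isMixedColouring_disjUnion_redEdge_iff.1 c.2).2⟩⟩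
  invFun x := ⟨Sum.elim x.1.1 ![x.2.1.1, x.2.1.2],
    isMixedColouring_disjUnion_redEdge_iff.2 ⟨x.1.2, x.2.2⟩⟩
  left_inv c := by
    ext (v | i)
    · rfl
    · fin_cases i <;> rfl
  right_inv x := rfl

open Classical in
lemma numColourings_disjUnion_redEdge_eq_sum [Fintype V] (k : ℕ) :
    numColourings (disjUnion R (⊤ : SimpleGraph (Fin 2))) (disjUnion B ⊥) ⊥ k =
      ∑ c₀ : {c₀ : V → Fin k // IsMixedColouring R B ⊥ c₀},
        Nat.card {p : Fin k × Fin k // IsAdmissibleRedPair B c₀.1 p} :=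
  (Nat.card_congr (disjUnionRedEdgeColouringEquiv k)).trans Nat.card_sigma

end RedEdge

lemma card_isAdmissibleRedPair {V α : Type*} [Fintype V] [Fintype α] (B : SimpleGraph V)
    {c₀ : V → α} (hc : Injective c₀) :
    (Nat.card {p : α × α // IsAdmissibleRedPair B c₀ p} : ℤ) =
      Fintype.card α ^ 2 - Fintype.card α - 2 * Nat.card B.edgeSet := by
  classical
  let blueEnds : Finset (α × α) := Finset.univ.map
    ⟨fun d : B.Dart => (c₀ d.fst, c₀ d.snd), fun d d' h =>
      Dart.ext _ _ (Prod.ext (hc (congrArg Prod.fst h)) (hc (congrArg Prod.snd h)))⟩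
  have mem_blueEnds (p : α × α) : p ∈ blueEnds ↔ ∃ v y, B.Adj v y ∧ p = (c₀ v, c₀ y) := by
    simp only [blueEnds, Finset.mem_map, Finset.mem_univ, true_and]
    exact ⟨fun ⟨d, h⟩ => ⟨_, _, d.adj, h.symm⟩, fun ⟨v, y, h, hp⟩ => ⟨⟨(v, y), h⟩, hp.symm⟩⟩
  have hsub : blueEnds ⊆ Finset.univ.offDiag := by
    intro p hp
    obtain ⟨v, y, h, rfl⟩ := (mem_blueEnds p).1 hp
    simpa using hc.ne h.ne
  have hcard : Nat.card {p : α × α // IsAdmissibleRedPair B c₀ p} =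
      (Finset.univ.offDiag \ blueEnds).card := by
    rw [← Fintype.card_coe, ← Nat.card_eq_fintype_card]
    exact Nat.card_congr (Equiv.subtypeEquivRight fun p => by
      simp [IsAdmissibleRedPair, mem_blueEnds])
  have hsplit := Finset.card_sdiff_add_card_eq_card hsub
  rw [Finset.card_map, Finset.card_univ, dart_card_eq_twice_card_edges, Finset.offDiag_card,
    Finset.card_univ, edgeFinset_card, ← Nat.card_eq_fintype_card] at hsplit
  have := Nat.le_mul_self (Fintype.card α)
  rw [sq]
  omega

theorem numColourings_disjUnion_redEdge_general
    {V : Type*} [Fintype V] (R B : SimpleGraph V) (hRB : Disjoint R B)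
    (hchi : ¬ ∃ c : V → Fin (Fintype.card V - 1), IsMixedColouring R B ⊥ c) :
    ∀ k : ℕ,
      (numColourings (disjUnion R (⊤ : SimpleGraph (Fin 2)))
          (disjUnion B (⊥ : SimpleGraph (Fin 2))) ⊥ k : ℤ) =
        (∏ i ∈ Finset.range (Fintype.card V), ((k : ℤ) - (i : ℤ))) *
          ((k : ℤ) ^ 2 - (k : ℤ) - 2 * (Nat.card B.edgeSet : ℤ)) := by
  intro k
  classical
  have hfibre (c₀ : {c₀ : V → Fin k // IsMixedColouring R B ⊥ c₀}) :
      (Nat.card {p : Fin k × Fin k // IsAdmissibleRedPair B c₀.1 p} : ℤ) =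
        (k : ℤ) ^ 2 - k - 2 * Nat.card B.edgeSet := by
    simpa using card_isAdmissibleRedPair B (c₀.2.injective hchi)
  rw [numColourings_disjUnion_redEdge_eq_sum, Nat.cast_sum,
    Finset.sum_congr rfl fun c₀ _ => hfibre c₀, Finset.sum_const, Finset.card_univ,
    ← Nat.card_eq_fintype_card, nsmul_eq_mul]
  change ((numColourings R B ⊥ k : ℕ) : ℤ) * _ = _
  rw [numColourings_eq_descFactorial hRB hchi, ← descPochhammer_eval_eq_descFactorial,
    descPochhammer_eval_eq_prod_range]

/-- For a 2-edge-coloured graph `G` on `n` vertices with `χ(G) = n` (no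
`(n-1)`-colouring exists), the number of `k`-colourings of the disjoint union of `G`
with a single red edge is `k(k-1)⋯(k-n+1)(k² - k - 2|B|)`. -/
theorem numColourings_disjUnion_redEdge
    {V : Type*} [Fintype V] (R B : SimpleGraph V) (hRB : Disjoint R B)
    (hn : 1 ≤ Fintype.card V)
    (hchi : ¬ ∃ c : V → Fin (Fintype.card V - 1), IsMixedColouring R B ⊥ c) :
    ∀ k : ℕ,
      (numColourings (disjUnion R (⊤ : SimpleGraph (Fin 2)))
          (disjUnion B (⊥ : SimpleGraph (Fin 2))) ⊥ k : ℤ) =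
        (∏ i ∈ Finset.range (Fintype.card V), ((k : ℤ) - (i : ℤ))) *
          ((k : ℤ) ^ 2 - (k : ℤ) - 2 * (Nat.card B.edgeSet : ℤ)) :=
  numColourings_disjUnion_redEdge_general R B hRB hchi
end
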